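/- arXiv:math/0105059 — 4 statements merged into one kernel-verified Lean document; each statement's English description precedes it below -/
import Mathlib

section
/- Let D be a ring of algebraic integers (the integral closure of ℤ in a number field), let d = r^s be a prime power, and let Z be an endomorphism of a free finitely generated D-module. Then Trace(Z^d) - (Trace(Z))^d lies in the ideal rD. -/
/-!
Modulo `p` it suffices to show `trace (M ^ p) = trace M ^ p` over a commutative ring of
characteristic `p`. There `C M` commutes with `X`, so `(X - C M) ^ p = X ^ p - C (M ^ p)`; taking
determinants, `expand p (M ^ p).charpoly = M.charpoly ^ p`, and in characteristic `p` the right side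
is `expand p M.charpoly` with the Frobenius applied to its coefficients. Comparing the coefficients
just below the leading one gives the claim.
-/

open NumberField Polynomial

namespace Matrix

variable {n R : Type*} [Fintype n] [DecidableEq n] [CommRing R] (p : ℕ) [Fact p.Prime] [CharP R p]

theorem expand_charpoly_pow_char [Nonempty n] (M : Matrix n n R) :
    expand R p (M ^ p).charpoly = M.charpoly ^ p := by
  have hcharmatrix :
      (expand R p : R[X] →+* R[X]).mapMatrix (charmatrix (M ^ p)) = charmatrix M ^ p := by
    apply matPolyEquiv.injective
    rw [map_pow, matPolyEquiv_charmatrix, matPolyEquiv_eq_X_pow_sub_C,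
      sub_pow_char_of_commute p (commute_X (C M)), ← C_pow]
  rw [charpoly, ← RingHom.coe_coe, RingHom.map_det, hcharmatrix, det_pow, charpoly]

theorem trace_pow_char (M : Matrix n n R) : trace (M ^ p) = trace M ^ p := by
  cases isEmpty_or_nonempty n
  · simp [trace, zero_pow (Fact.out : p.Prime).ne_zero]
  have hcoeff := congr_arg (coeff · (p * (Fintype.card n - 1)))
    ((expand_charpoly_pow_char p M).trans (map_frobenius_expand p M.charpoly).symm)
  simp only [coeff_expand_mul' (Fact.out : p.Prime).pos, coeff_map] at hcoeff
  rw [trace_eq_neg_charpoly_coeff, trace_eq_neg_charpoly_coeff, hcoeff, ← frobenius_def,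
    ← map_neg]

theorem trace_pow_char_pow (M : Matrix n n R) (k : ℕ) : trace (M ^ p ^ k) = trace M ^ p ^ k := by
  induction k with
  | zero => simp
  | succ k ih => rw [pow_succ, pow_mul, trace_pow_char, ih, ← pow_mul]

end Matrix

theorem Matrix.trace_pow_prime_pow_sub_trace_pow_mem_span {n R : Type*} [Fintype n]
    [DecidableEq n] [CommRing R] {p : ℕ} (hp : p.Prime) (M : Matrix n n R) (k : ℕ) :
    trace (M ^ p ^ k) - trace M ^ p ^ k ∈ Ideal.span {(p : R)} := by
  by_cases hunit : IsUnit (p : R)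
  · simp [Ideal.span_singleton_eq_top.mpr hunit]
  have : Fact p.Prime := ⟨hp⟩
  have : CharP (R ⧸ Ideal.span {(p : R)}) p := CharP.quotient R p hunit
  rw [← Ideal.Quotient.eq_zero_iff_mem, map_sub, map_pow, AddMonoidHom.map_trace,
    AddMonoidHom.map_trace, ← RingHom.mapMatrix_apply, ← RingHom.mapMatrix_apply, map_pow,
    trace_pow_char_pow, sub_self]

theorem trace_pow_prime_pow_sub_pow_trace_mem_span_general
    (K : Type*) [Field K]
    (n : ℕ) (Z : Matrix (Fin n) (Fin n) (𝓞 K))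
    (r s : ℕ) (hr : r.Prime) :
    Matrix.trace (Z ^ (r ^ s)) - (Matrix.trace Z) ^ (r ^ s) ∈
      Ideal.span {(r : 𝓞 K)} :=
  Matrix.trace_pow_prime_pow_sub_trace_pow_mem_span hr Z s

/-- Let `D` be the ring of integers of a number field, `d = r^s` a prime power,
and `Z` an endomorphism of a free finitely generated `D`-module (a square matrix
over `D`).  Then `Trace(Z^d) - (Trace Z)^d` lies in the ideal `rD`. -/
theorem trace_pow_prime_pow_sub_pow_trace_mem_span
    (K : Type*) [Field K] [NumberField K]
    (n : ℕ) (Z : Matrix (Fin n) (Fin n) (𝓞 K))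
    (r s : ℕ) (hr : r.Prime) (hs : 1 ≤ s) :
    Matrix.trace (Z ^ (r ^ s)) - (Matrix.trace Z) ^ (r ^ s) ∈
      Ideal.span {(r : 𝓞 K)} :=
  trace_pow_prime_pow_sub_pow_trace_mem_span_general K n Z r s hr
end

section
/- Let D be a Dedekind domain with class group C(D), and let M, N be finitely generated projective D-modules of the same rank. M is isomorphic to N if and only if the Steinitz classes of M and N in C(D) are equal. In particular M is free if and only if its Steinitz class is trivial. -/
/-!
Top alternating forms on `D^k × I` are the same as linear forms on `I`, via evaluation at
`(0, m), (e₀, 0), …, (e_{k-1}, 0)`: a form `φ` on `I` is hit by `det ((x, m) ↦ (φ m, x))`, and a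
top form vanishing at `(0, a), (e₀, 0), …` for some `0 ≠ a ∈ I` vanishes everywhere, because
`a • (D^k × I)` lies in the span of these vectors. Hence `D^k × I ≅ D^k × J` gives
`Hom(I, D) ≅ Hom(J, D)`, so `I ≅ J` since ideals of a Dedekind domain are reflexive.
Finally, an isomorphism `f : I ≅ J` satisfies `f(a) I = a J`, so isomorphic ideals have the same
class.
-/

open nonZeroDivisors Module Function

namespace IsDedekindDomain

variable {R : Type*} [CommRing R] [IsDedekindDomain R]

theorem projective_of_isTorsionFree (M : Type*) [AddCommGroup M] [Module R M] [Module.Finite R M]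
    [IsTorsionFree R M] : Projective R M :=
  have := Module.finitePresentation_of_finite R M
  Flat.projective_of_finitePresentation

instance (I : Ideal R) : Projective R I := projective_of_isTorsionFree I

end IsDedekindDomain

namespace Ideal

variable {R : Type*} [CommRing R]

theorem coe_mul_apply_comm {I J : Ideal R} (f : I →ₗ[R] J) (i i' : I) :
    (i : R) * f i' = i' * f i := by
  have h : (i : R) • i' = (i' : R) • i := Subtype.ext (mul_comm _ _)
  simpa using congr(($(congrArg f h) : R))

theorem span_singleton_apply_mul_eq {I J : Ideal R} (f : I ≃ₗ[R] J) (a : I) :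
    span {(f a : R)} * I = span {(a : R)} * J := by
  ext w
  simp only [mem_span_singleton_mul]
  constructor
  · rintro ⟨i, hi, rfl⟩
    refine ⟨f ⟨i, hi⟩, (f ⟨i, hi⟩).2, ?_⟩
    have := coe_mul_apply_comm f.toLinearMap a ⟨i, hi⟩
    simp only [LinearEquiv.coe_coe] at this
    rw [this, mul_comm]
  · rintro ⟨j, hj, rfl⟩
    refine ⟨f.symm ⟨j, hj⟩, (f.symm ⟨j, hj⟩).2, ?_⟩
    have := coe_mul_apply_comm f.toLinearMap a (f.symm ⟨j, hj⟩)
    simp only [LinearEquiv.coe_coe, LinearEquiv.apply_symm_apply] at this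
    rw [this, mul_comm]

noncomputable def equivSpanSingletonMul [IsDomain R] {x : R} (hx : x ≠ 0) (I : Ideal R) :
    I ≃ₗ[R] ↥(span {x} * I) :=
  Submodule.equivMapOfInjective (LinearMap.mulLeft R x) (mul_right_injective₀ hx) I ≪≫ₗ
    LinearEquiv.ofEq _ _ (by ext; simp [mem_span_singleton_mul])

end Ideal

theorem ClassGroup.mk0_eq_mk0_iff_nonempty_linearEquiv {R : Type*} [CommRing R]
    [IsDedekindDomain R] {I J : (Ideal R)⁰} :
    ClassGroup.mk0 I = ClassGroup.mk0 J ↔ Nonempty ((I : Ideal R) ≃ₗ[R] (J : Ideal R)) := by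
  rw [ClassGroup.mk0_eq_mk0_iff]
  constructor
  · rintro ⟨x, y, hx, hy, h⟩
    exact ⟨Ideal.equivSpanSingletonMul hx I ≪≫ₗ LinearEquiv.ofEq _ _ h ≪≫ₗ
      (Ideal.equivSpanSingletonMul hy J).symm⟩
  · rintro ⟨f⟩
    obtain ⟨a, haI, ha0⟩ := (Submodule.ne_bot_iff _).mp (mem_nonZeroDivisors_iff_ne_zero.mp I.2)
    refine ⟨f ⟨a, haI⟩, a, ?_, ha0, Ideal.span_singleton_apply_mul_eq f ⟨a, haI⟩⟩
    have hfa : f ⟨a, haI⟩ ≠ 0 := f.map_ne_zero_iff.mpr fun h => ha0 congr(Subtype.val $h)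
    exact fun h => hfa (Subtype.ext h)

theorem AlternatingMap.eq_zero_of_smul_mem_span {R P ι : Type*} [CommRing R] [IsDomain R]
    [AddCommGroup P] [Module R P] [Fintype ι] [DecidableEq ι] (ω : P [⋀^ι]→ₗ[R] R) {E : ι → P}
    (hE : ω E = 0) {c : R} (hc : c ≠ 0) (hspan : ∀ p, c • p ∈ Submodule.span R (Set.range E)) :
    ω = 0 := by
  let ψ := (Pi.basisFun R ι).constr R E
  have hψ : ω.compLinearMap ψ = 0 := by
    rw [← AlternatingMap.map_basis_eq_zero_iff (Pi.basisFun R ι)]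
    simpa [ψ, Function.comp_def] using hE
  choose v hv using fun p => (Module.Basis.constr_range (Pi.basisFun R ι) R (f := E)).symm ▸ hspan p
  ext p
  have : c ^ Fintype.card ι • ω p = 0 := calc
    c ^ Fintype.card ι • ω p = ω fun i => c • p i := by simp [AlternatingMap.map_smul_univ]
    _ = ω.compLinearMap ψ fun i => v (p i) := by
      simp only [AlternatingMap.compLinearMap_apply, ψ, hv]
    _ = 0 := by rw [hψ]; rfl
  simpa [hc] using this

section TopForms

variable {R M : Type*} [CommRing R] [AddCommGroup M] [Module R M] {k : ℕ}

def consUnitVectors (m : M) : Fin (k + 1) → (Fin k → R) × M :=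
  Fin.cons (0, m) fun j => (Pi.single j 1, 0)

variable (R M k) in
noncomputable def restrictTopForm :
    ((Fin k → R) × M) [⋀^Fin (k + 1)]→ₗ[R] R →ₗ[R] Dual R M where
  toFun ω := ω.toMultilinearMap.toLinearMap (consUnitVectors 0) 0 ∘ₗ LinearMap.inr R (Fin k → R) M
  map_add' ω ω' := by ext; simp
  map_smul' c ω := by ext; simp

theorem restrictTopForm_apply (ω : ((Fin k → R) × M) [⋀^Fin (k + 1)]→ₗ[R] R) (m : M) :
    restrictTopForm R M k ω m = ω (consUnitVectors m) := by
  simp [restrictTopForm, MultilinearMap.toLinearMap_apply, consUnitVectors, Fin.update_cons_zero]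

theorem restrictTopForm_surjective : Surjective (restrictTopForm R M k) := by
  intro φ
  let T : (Fin k → R) × M →ₗ[R] Fin (k + 1) → R :=
    (Fin.consLinearEquiv R fun _ => R).toLinearMap ∘ₗ (φ.prodMap LinearMap.id) ∘ₗ
      (LinearEquiv.prodComm R _ M).toLinearMap
  refine ⟨(Pi.basisFun R (Fin (k + 1))).det.compLinearMap T, LinearMap.ext fun m => ?_⟩
  have hT : T ∘ consUnitVectors m =
      update (Pi.basisFun R (Fin (k + 1))) 0 (φ m • Pi.basisFun R (Fin (k + 1)) 0) := by
    ext i j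
    cases i using Fin.cases <;> cases j using Fin.cases <;>
      simp [T, consUnitVectors, Pi.single_apply]
  rw [restrictTopForm_apply, AlternatingMap.compLinearMap_apply]
  change (Pi.basisFun R (Fin (k + 1))).det (T ∘ consUnitVectors m) = φ m
  rw [hT, AlternatingMap.map_update_smul, update_eq_self, Basis.det_self, smul_eq_mul, mul_one]

theorem prod_zero_mem_span_consUnitVectors (m₀ : M) (y : Fin k → R) :
    ((y, 0) : (Fin k → R) × M) ∈ Submodule.span R (Set.range (consUnitVectors m₀)) := by
  have : ((y, 0) : (Fin k → R) × M) = ∑ j, y j • consUnitVectors m₀ j.succ := by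
    ext <;> simp [consUnitVectors, Prod.fst_sum, Prod.snd_sum, Finset.sum_apply, Pi.single_apply]
  rw [this]
  exact Submodule.sum_mem _ fun j _ => Submodule.smul_mem _ _ (Submodule.subset_span ⟨j.succ, rfl⟩)

theorem restrictTopForm_injective [IsDomain R] {c : R} (hc : c ≠ 0) {m₀ : M}
    (hM : ∀ m : M, c • m ∈ R ∙ m₀) : Injective (restrictTopForm R M k) := by
  rw [injective_iff_map_eq_zero]
  intro ω hω
  refine ω.eq_zero_of_smul_mem_span (E := consUnitVectors m₀) ?_ hc ?_
  · rw [← restrictTopForm_apply, hω, LinearMap.zero_apply]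
  rintro ⟨x, m⟩
  obtain ⟨r, hr⟩ := Submodule.mem_span_singleton.mp (hM m)
  have : c • (x, m) = (c • x, 0) + r • consUnitVectors m₀ 0 := by
    simp [consUnitVectors, hr]
  rw [this]
  exact add_mem (prod_zero_mem_span_consUnitVectors m₀ _)
    (Submodule.smul_mem _ _ (Submodule.subset_span ⟨0, rfl⟩))

end TopForms

theorem Ideal.restrictTopForm_bijective {R : Type*} [CommRing R] [IsDomain R] {I : Ideal R}
    (hI : I ≠ ⊥) (k : ℕ) : Bijective (restrictTopForm R I k) := by
  obtain ⟨a, haI, ha0⟩ := (Submodule.ne_bot_iff I).mp hI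
  refine ⟨restrictTopForm_injective ha0 (m₀ := ⟨a, haI⟩) fun m => ?_, restrictTopForm_surjective⟩
  exact Submodule.mem_span_singleton.mpr ⟨m, Subtype.ext (mul_comm _ _)⟩

theorem Ideal.nonempty_linearEquiv_of_prod {R : Type*} [CommRing R] [IsDedekindDomain R]
    {I J : Ideal R} (hI : I ≠ ⊥) (hJ : J ≠ ⊥) {k : ℕ}
    (e : ((Fin k → R) × I) ≃ₗ[R] ((Fin k → R) × J)) : Nonempty (I ≃ₗ[R] J) := by
  let dualEquiv : Dual R I ≃ₗ[R] Dual R J :=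
    (LinearEquiv.ofBijective _ (restrictTopForm_bijective hI k)).symm ≪≫ₗ
      AlternatingMap.domLCongr R R (Fin (k + 1)) R e ≪≫ₗ
      LinearEquiv.ofBijective _ (restrictTopForm_bijective hJ k)
  exact ⟨evalEquiv R I ≪≫ₗ dualEquiv.symm.dualMap ≪≫ₗ (evalEquiv R J).symm⟩

theorem nonempty_prod_linearEquiv_iff_mk0_eq {R : Type*} [CommRing R] [IsDedekindDomain R]
    (k : ℕ) (I J : (Ideal R)⁰) :
    Nonempty (((Fin k → R) × (I : Ideal R)) ≃ₗ[R] ((Fin k → R) × (J : Ideal R))) ↔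
      ClassGroup.mk0 I = ClassGroup.mk0 J := by
  rw [ClassGroup.mk0_eq_mk0_iff_nonempty_linearEquiv]
  refine ⟨fun ⟨e⟩ => Ideal.nonempty_linearEquiv_of_prod ?_ ?_ e,
    fun ⟨f⟩ => ⟨.prodCongr (.refl _ _) f⟩⟩
  exacts [mem_nonZeroDivisors_iff_ne_zero.mp I.2, mem_nonZeroDivisors_iff_ne_zero.mp J.2]

theorem iso_iff_steinitz_class_eq_general
    (D : Type*) [CommRing D] [IsDedekindDomain D]
    (M N : Type*) [AddCommGroup M] [Module D M] [AddCommGroup N] [Module D N]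
    (k : ℕ) (I J : (Ideal D)⁰)
    (eM : M ≃ₗ[D] ((Fin k → D) × (I : Ideal D)))
    (eN : N ≃ₗ[D] ((Fin k → D) × (J : Ideal D))) :
    (Nonempty (M ≃ₗ[D] N) ↔ ClassGroup.mk0 I = ClassGroup.mk0 J) ∧
      (Nonempty (M ≃ₗ[D] (Fin (k + 1) → D)) ↔ ClassGroup.mk0 I = 1) := by
  let eFree : (Fin (k + 1) → D) ≃ₗ[D] (Fin k → D) × ((1 : (Ideal D)⁰) : Ideal D) :=
    (Fin.consLinearEquiv D fun _ => D).symm ≪≫ₗ LinearEquiv.prodComm D D _ ≪≫ₗ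
      .prodCongr (.refl _ _) (Submodule.topEquiv.symm ≪≫ₗ .ofEq _ _ Ideal.one_eq_top.symm)
  constructor
  · rw [← nonempty_prod_linearEquiv_iff_mk0_eq]
    exact Nonempty.congr (fun f => eM.symm ≪≫ₗ f ≪≫ₗ eN) fun g => eM ≪≫ₗ g ≪≫ₗ eN.symm
  · rw [← map_one ClassGroup.mk0, ← nonempty_prod_linearEquiv_iff_mk0_eq]
    exact Nonempty.congr (fun f => eM.symm ≪≫ₗ f ≪≫ₗ eFree) fun g => eM ≪≫ₗ g ≪≫ₗ eFree.symm

/-- Classification of finitely generated projective modules over a Dedekind domain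
by rank and Steinitz class: if `M ≅ D^k ⊕ I` and `N ≅ D^k ⊕ J` (so `M` and `N`
have the same rank), then `M ≅ N` if and only if the ideal classes of `I` and `J`
in the class group of `D` coincide.  (The class of `I` is the Steinitz class of
`M`.)  In particular `M` is free iff its Steinitz class is trivial. -/
theorem iso_iff_steinitz_class_eq
    (D : Type*) [CommRing D] [IsDomain D] [IsDedekindDomain D]
    (M N : Type*) [AddCommGroup M] [Module D M] [AddCommGroup N] [Module D N]
    [Module.Finite D M] [Module.Projective D M]
    [Module.Finite D N] [Module.Projective D N]
    (k : ℕ) (I J : (Ideal D)⁰)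
    (eM : M ≃ₗ[D] ((Fin k → D) × (I : Ideal D)))
    (eN : N ≃ₗ[D] ((Fin k → D) × (J : Ideal D))) :
    (Nonempty (M ≃ₗ[D] N) ↔ ClassGroup.mk0 I = ClassGroup.mk0 J) ∧
      (Nonempty (M ≃ₗ[D] (Fin (k + 1) → D)) ↔ ClassGroup.mk0 I = 1) :=
  iso_iff_steinitz_class_eq_general D M N k I J eM eN
end

section
/- Let D be a Dedekind domain, j : D → D' an injective ring homomorphism into another Dedekind domain D' making D' a flat D-algebra, and M a finitely generated projective D-module. Then the Steinitz class of M ⊗_D D' equals the image of the Steinitz class of M under the induced map on class groups C(D) → C(D') sending [I] to [ID']. -/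
/-!
Tensoring with a flat `D'` turns `D^k ⊕ I` into `D'^k ⊕ I D'`, since `D' ⊗ I ≅ I D'` by
flatness. It remains to cancel the free summand: an isomorphism `f : R^k ⊕ A ≅ R^k ⊕ B` of
nonzero ideals of a domain `R` extends to an automorphism `T` of `K^{k+1}`, `K = Frac R`, and
multiplication by `det T` maps `A` onto `B`. Indeed, for `a ∈ A` the matrix of
`T ∘ diag(1, …, 1, a)` has entries in `R` and last row in `B`, so `det T · a ∈ B`; symmetrically
`(det T)⁻¹ · B ⊆ A`. If one of the ideals is zero, so is the other, by comparing ranks.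
-/

open nonZeroDivisors TensorProduct

theorem Matrix.det_mem_of_row_mem {n R : Type*} [Fintype n] [DecidableEq n] [CommRing R]
    {I : Ideal R} {M : Matrix n n R} (i : n) (h : ∀ j, M i j ∈ I) : M.det ∈ I := by
  rw [M.det_eq_sum_mul_adjugate_row i]
  exact I.sum_mem fun j _ => I.mul_mem_right _ (h j)

universe u v in
theorem rank_prod_eq_add {R : Type u} {M N : Type v} [Ring R] [HasRankNullity.{v} R]
    [AddCommGroup M] [Module R M] [AddCommGroup N] [Module R N] :
    Module.rank R (M × N) = Module.rank R M + Module.rank R N := by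
  rw [← (LinearMap.fst R M N).rank_range_add_rank_ker,
    LinearMap.range_eq_top.2 LinearMap.fst_surjective, LinearMap.ker_fst, rank_top,
    rank_range_of_injective _ LinearMap.inr_injective]

theorem Ideal.rank_eq_of_prod_linearEquiv {R : Type*} [CommRing R] [IsDomain R] {k : ℕ}
    {A B : Ideal R} (e : ((Fin k → R) × A) ≃ₗ[R] ((Fin k → R) × B)) :
    Module.rank R A = Module.rank R B := by
  have h := e.rank_eq
  rw [rank_prod_eq_add, rank_prod_eq_add] at h
  exact Cardinal.eq_of_add_eq_add_left h (by rw [rank_fin_fun]; exact Cardinal.natCast_lt_aleph0)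

section FractionField

variable {R : Type*} [CommRing R] (K : Type*) [CommRing K] [Algebra R K] {k : ℕ}

noncomputable def Ideal.finProdEmbedding (A : Ideal R) : (Fin k → R) × A →ₗ[R] (Fin k → K) × K :=
  ((Algebra.linearMap R K).compLeft (Fin k)).prodMap (Algebra.linearMap R K ∘ₗ A.subtype)

theorem Ideal.det_mem_coeSubmodule_of_basis_mem_range {B : Ideal R}
    (U : Module.End K ((Fin k → K) × K))
    (hU : ∀ j, U ((Pi.basisFun K (Fin k)).prod (.singleton Unit K) j) ∈
      LinearMap.range (B.finProdEmbedding K)) :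
    LinearMap.det U ∈ IsLocalization.coeSubmodule K B := by
  set b := (Pi.basisFun K (Fin k)).prod (.singleton Unit K)
  choose p hp using hU
  let N : Matrix (Fin k ⊕ Unit) (Fin k ⊕ Unit) R :=
    .of fun i j => Sum.elim (p j).1 (fun _ => (p j).2) i
  have hN : LinearMap.toMatrix b b U = (algebraMap R K).mapMatrix N := by
    ext i j
    rw [LinearMap.toMatrix_apply, ← hp]
    rcases i with i | i <;> simp [b, finProdEmbedding, N]
  rw [← LinearMap.det_toMatrix b, hN, ← RingHom.map_det]
  exact (IsLocalization.mem_coeSubmodule K B).2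
    ⟨N.det, Matrix.det_mem_of_row_mem (.inr ()) fun j => (p j).2.2, rfl⟩

theorem Ideal.det_mul_mem_coeSubmodule [Nontrivial K] {A B : Ideal R}
    {e : ((Fin k → R) × A) ≃ₗ[R] ((Fin k → R) × B)} {T : ((Fin k → K) × K) ≃ₗ[K] ((Fin k → K) × K)}
    (hT : ∀ x, T (A.finProdEmbedding K x) = B.finProdEmbedding K (e x)) {a : R} (ha : a ∈ A) :
    (LinearEquiv.det T : K) * algebraMap R K a ∈ IsLocalization.coeSubmodule K B := by
  set b := (Pi.basisFun K (Fin k)).prod (.singleton Unit K)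
  let S : Module.End K ((Fin k → K) × K) := LinearMap.id.prodMap (algebraMap R K a • LinearMap.id)
  have hdet : LinearMap.det (T.toLinearMap ∘ₗ S) = LinearEquiv.det T * algebraMap R K a := by
    rw [LinearMap.det_comp, LinearMap.det_prodMap, LinearMap.det_smul, Module.finrank_self,
      pow_one, LinearMap.det_id, LinearMap.det_id, one_mul, mul_one, LinearEquiv.coe_det]
  have hS : ∀ j, ∃ x, S (b j) = A.finProdEmbedding K x := by
    rintro (i | i)
    · exact ⟨(Pi.single i 1, 0), by ext <;> simp [b, S, finProdEmbedding, Pi.single_apply]⟩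
    · exact ⟨(0, ⟨a, ha⟩), by ext <;> simp [b, S, finProdEmbedding, Algebra.algebraMap_eq_smul_one]⟩
  rw [← hdet]
  refine det_mem_coeSubmodule_of_basis_mem_range K _ fun j => ?_
  obtain ⟨x, hx⟩ := hS j
  exact ⟨e x, by rw [LinearMap.comp_apply, hx, LinearEquiv.coe_coe, hT]⟩

theorem Ideal.isLocalizedModule_subtype [IsDomain R] [IsFractionRing R K] {A : Ideal R}
    (hA : A ≠ ⊥) : IsLocalizedModule R⁰ (Algebra.linearMap R K ∘ₗ A.subtype) where
  map_units := IsLocalizedModule.map_units (Algebra.linearMap R K)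
  surj x := by
    obtain ⟨a, haA, ha⟩ := Submodule.exists_mem_ne_zero_of_ne_bot hA
    obtain ⟨⟨r, s⟩, hx⟩ := IsLocalization.surj R⁰ x
    refine ⟨(⟨r * a, A.mul_mem_left r haA⟩, s * ⟨a, mem_nonZeroDivisors_of_ne_zero ha⟩), ?_⟩
    simp only [Submonoid.smul_def, Submonoid.coe_mul, Algebra.smul_def, map_mul,
      LinearMap.coe_comp, Submodule.coe_subtype, Function.comp_apply, Algebra.linearMap_apply, ← hx]
    ring
  exists_of_eq h := ⟨1, by simpa using IsFractionRing.injective R K h⟩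

theorem Ideal.isLocalizedModule_finProdEmbedding [IsDomain R] [IsFractionRing R K]
    {A : Ideal R} (hA : A ≠ ⊥) : IsLocalizedModule R⁰ (A.finProdEmbedding K (k := k)) :=
  have := A.isLocalizedModule_subtype K hA
  have : IsLocalizedModule R⁰ ((Algebra.linearMap R K).compLeft (Fin k)) :=
    IsLocalizedModule.pi R⁰ fun _ : Fin k => Algebra.linearMap R K
  IsLocalizedModule.prodMap R⁰ _ _

theorem Ideal.exists_extension_of_prod_linearEquiv [IsDomain R] [IsFractionRing R K]
    {A B : Ideal R} (hA : A ≠ ⊥) (hB : B ≠ ⊥) (e : ((Fin k → R) × A) ≃ₗ[R] ((Fin k → R) × B)) :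
    ∃ T : ((Fin k → K) × K) ≃ₗ[K] ((Fin k → K) × K),
      ∀ x, T (A.finProdEmbedding K x) = B.finProdEmbedding K (e x) := by
  have := A.isLocalizedModule_finProdEmbedding K (k := k) hA
  have := B.isLocalizedModule_finProdEmbedding K (k := k) hB
  exact ⟨(IsLocalizedModule.linearEquiv R⁰ (A.finProdEmbedding K)
    (B.finProdEmbedding K ∘ₗ e.toLinearMap)).extendScalarsOfIsLocalization R⁰ K,
    IsLocalizedModule.linearEquiv_apply R⁰ _ _⟩

theorem Ideal.nonempty_linearEquiv_of_mul_mem_coeSubmodule [IsFractionRing R K] {A B : Ideal R}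
    (d : Kˣ) (hAB : ∀ a ∈ A, (d : K) * algebraMap R K a ∈ IsLocalization.coeSubmodule K B)
    (hBA : ∀ b ∈ B, ((d⁻¹ : Kˣ) : K) * algebraMap R K b ∈ IsLocalization.coeSubmodule K A) :
    Nonempty (A ≃ₗ[R] B) := by
  let μ : K ≃ₗ[R] K := (LinearEquiv.smulOfUnit d).restrictScalars R
  have hμ : (IsLocalization.coeSubmodule K A).map (μ : K →ₗ[R] K) =
      IsLocalization.coeSubmodule K B := by
    refine le_antisymm ?_ fun y hy => ?_
    · rintro _ ⟨_, hx, rfl⟩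
      obtain ⟨a, ha, rfl⟩ := (IsLocalization.mem_coeSubmodule K A).1 hx
      exact hAB a ha
    · obtain ⟨b, hb, rfl⟩ := (IsLocalization.mem_coeSubmodule K B).1 hy
      exact ⟨_, hBA b hb, d.mul_inv_cancel_left _⟩
  let ι := Submodule.equivMapOfInjective (Algebra.linearMap R K) (IsFractionRing.injective R K)
  exact ⟨ι A ≪≫ₗ μ.submoduleMap _ ≪≫ₗ .ofEq _ _ hμ ≪≫ₗ (ι B).symm⟩

end FractionField

theorem Ideal.nonempty_linearEquiv_of_prod_linearEquiv_of_ne_bot {R : Type*} [CommRing R]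
    [IsDomain R] {k : ℕ} {A B : Ideal R} (hA : A ≠ ⊥) (hB : B ≠ ⊥)
    (e : ((Fin k → R) × A) ≃ₗ[R] ((Fin k → R) × B)) : Nonempty (A ≃ₗ[R] B) := by
  obtain ⟨T, hT⟩ := exists_extension_of_prod_linearEquiv (FractionRing R) hA hB e
  have hT' : ∀ y, T.symm (B.finProdEmbedding _ y) = A.finProdEmbedding _ (e.symm y) := by
    intro y
    rw [T.symm_apply_eq, hT, e.apply_symm_apply]
  refine nonempty_linearEquiv_of_mul_mem_coeSubmodule _ (LinearEquiv.det T)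
    (fun a ha => det_mul_mem_coeSubmodule _ hT ha) fun b hb => ?_
  rw [← map_inv, ← LinearEquiv.det_symm]
  exact det_mul_mem_coeSubmodule _ hT' hb

theorem Ideal.nonempty_linearEquiv_of_prod_linearEquiv {R : Type*} [CommRing R] [IsDomain R]
    {k : ℕ} {A B : Ideal R} (e : ((Fin k → R) × A) ≃ₗ[R] ((Fin k → R) × B)) :
    Nonempty (A ≃ₗ[R] B) := by
  have hAB : A = ⊥ ↔ B = ⊥ := by
    rw [← Submodule.rank_eq_zero, ← Submodule.rank_eq_zero, rank_eq_of_prod_linearEquiv e]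
  by_cases hA : A = ⊥
  · exact ⟨.ofEq A B (hA.trans (hAB.1 hA).symm)⟩
  · exact nonempty_linearEquiv_of_prod_linearEquiv_of_ne_bot hA (hA ∘ hAB.2) e

theorem Ideal.map_algebraTensorModuleRid_baseChange (D D' : Type*) [CommRing D] [CommRing D']
    [Algebra D D'] (I : Ideal D) :
    (I.baseChange D').map (AlgebraTensorModule.rid D D' D' : D' ⊗[D] D →ₗ[D'] D') =
      I.map (algebraMap D D') := by
  rw [Submodule.baseChange_eq_span, Submodule.map_span, Ideal.map, Submodule.map_coe,
    ← Set.image_comp]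
  congr 1
  ext x
  simp [Algebra.algebraMap_eq_smul_one]

noncomputable def Ideal.tensorEquivMap (D D' : Type*) [CommRing D] [CommRing D'] [Algebra D D']
    [Module.Flat D D'] (I : Ideal D) : D' ⊗[D] I ≃ₗ[D'] I.map (algebraMap D D') :=
  Submodule.toBaseChange.toLinearEquiv D' I ≪≫ₗ
    (AlgebraTensorModule.rid D D' D').submoduleMap _ ≪≫ₗ
    .ofEq _ _ (map_algebraTensorModuleRid_baseChange D D' I)

theorem steinitz_class_base_change_general
    (D D' : Type*) [CommRing D]
    [CommRing D'] [IsDomain D'] [Algebra D D']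
    [Module.Flat D D']
    (M : Type*) [AddCommGroup M] [Module D M]
    (k : ℕ) (I : Ideal D)
    (eM : M ≃ₗ[D] ((Fin k → D) × I))
    (J : Ideal D')
    (eM' : (TensorProduct D D' M) ≃ₗ[D'] ((Fin k → D') × J)) :
    Nonempty ((Ideal.map (algebraMap D D') I) ≃ₗ[D'] J) :=
  Ideal.nonempty_linearEquiv_of_prod_linearEquiv <|
    ((piScalarRight D D' D' (Fin k)).symm.prodCongr (I.tensorEquivMap D D').symm) ≪≫ₗ
      (prodRight D D' D' _ _).symm ≪≫ₗ (eM.baseChange D D' _ _).symm ≪≫ₗ eM'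

/-- Steinitz classes are compatible with flat base change `j : D → D'` between
Dedekind domains: if `M ≅ D^k ⊕ I`, and `M ⊗_D D' ≅ D'^k ⊕ J`, then the class of
`J` equals the class of the extended ideal `I·D'`; equivalently `J` and `I·D'`
are isomorphic as `D'`-modules. -/
theorem steinitz_class_base_change
    (D D' : Type*) [CommRing D] [IsDomain D] [IsDedekindDomain D]
    [CommRing D'] [IsDomain D'] [IsDedekindDomain D'] [Algebra D D']
    (hinj : Function.Injective (algebraMap D D')) [Module.Flat D D']
    (M : Type*) [AddCommGroup M] [Module D M]
    [Module.Finite D M] [Module.Projective D M]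
    (k : ℕ) (I : Ideal D) (hI : I ≠ 0)
    (eM : M ≃ₗ[D] ((Fin k → D) × I))
    (J : Ideal D') (hJ : J ≠ 0)
    (eM' : (TensorProduct D D' M) ≃ₗ[D'] ((Fin k → D') × J)) :
    Nonempty ((Ideal.map (algebraMap D D') I) ≃ₗ[D'] J) :=
  steinitz_class_base_change_general D D' M k I eM J eM'
end

section
/- Let p ≡ 1 mod 4 be an odd prime, A = ζ_{2p}, α = ζ_{4p} with α² = A. If S⁺ is a finitely generated projective ℤ[A]-module that becomes free after tensoring with ℤ[A, 1/p], then S⁺ ⊗_{ℤ[A]} ℤ[α] is a free ℤ[α]-module. -/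
/-!
Write `R = 𝓞 K = ℤ[ζ_p]` (for odd `p`, `ℚ(ζ_{2p}) = ℚ(ζ_p)`). Since `p` is a unit times
`(ζ_p - 1)^(p-1)` and `ζ_p - 1` is prime, every ideal of `R` containing a power of `p` is a power
of `(ζ_p - 1)`, hence principal. Clearing denominators in a basis of `S⁺[1/p]` embeds `S⁺` into
`Rⁿ` with image containing `pᵈ Rⁿ`. Such a lattice `M` is free by induction on `n`: its first
coordinates form an ideal containing `pᵈ`, which is principal, so `M ≅ R ⊕ (M ∩ (0 × Rⁿ⁻¹))`.
A free `S⁺` has a free base change to `𝓞 L`.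
-/

open NumberField

/-- `2p` as a positive natural number. -/
def twoPPNat17 (p : ℕ) (hp : p.Prime) : ℕ+ := ⟨2 * p, by have := hp.pos; omega⟩

/-- `4p` as a positive natural number. -/
def fourPPNat17 (p : ℕ) (hp : p.Prime) : ℕ+ := ⟨4 * p, by have := hp.pos; omega⟩

theorem Submodule.exists_pow_smul_mem_of_le_span {R : Type*} [CommRing R] {x : R}
    {V : Type*} [AddCommGroup V] [Module R V] [Module (Localization.Away x) V]
    [IsScalarTower R (Localization.Away x) V]
    {N₁ N₂ : Submodule R V} (hN₂ : N₂.FG)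
    (hle : N₂ ≤ (Submodule.span (Localization.Away x) (N₁ : Set V)).restrictScalars R) :
    ∃ d : ℕ, ∀ v ∈ N₂, x ^ d • v ∈ N₁ := by
  classical
  obtain ⟨s, rfl⟩ := hN₂
  have hgen (v : V) (hv : v ∈ s) : ∃ d : ℕ, x ^ d • v ∈ N₁ := by
    obtain ⟨y, hy, z, hvy⟩ :=
      (IsLocalization.mem_span_iff (Submonoid.powers x)).mp (hle (Submodule.subset_span hv))
    obtain ⟨d, hd : x ^ d = z⟩ := z.2
    refine ⟨d, ?_⟩
    rwa [hd, hvy, ← algebraMap_smul (Localization.Away x), smul_smul,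
      IsLocalization.mk'_spec', map_one, one_smul, ← N₁.span_eq]
  choose! d hd using hgen
  refine ⟨∑ v ∈ s, d v, fun v hv ↦ ?_⟩
  suffices Submodule.span R s ≤ N₁.comap ((x ^ ∑ v ∈ s, d v) • LinearMap.id) from this hv
  refine Submodule.span_le.mpr fun v hv ↦ ?_
  have : x ^ ∑ v ∈ s, d v = x ^ (∑ v ∈ s, d v - d v) * x ^ d v := by
    rw [← pow_add, Nat.sub_add_cancel (Finset.single_le_sum (by simp) hv)]
  simpa [this, mul_smul] using N₁.smul_mem _ (hd v hv)

section

variable {R : Type*} [CommRing R] [IsDomain R]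

theorem Submodule.free_of_free_comap_inr {N : Type*} [AddCommGroup N] [Module R N]
    (M : Submodule R (R × N)) {a : R} (ha : a ≠ 0)
    (hrange : LinearMap.range (LinearMap.fst R R N ∘ₗ M.subtype) = R ∙ a)
    [Module.Free R (M.comap (LinearMap.inr R R N))] : Module.Free R M := by
  let g : M →ₗ[R] R := (LinearEquiv.toSpanNonzeroSingleton R R a ha).symm.toLinearMap ∘ₗ
    (LinearEquiv.ofEq _ _ hrange).toLinearMap ∘ₗ (LinearMap.fst R R N ∘ₗ M.subtype).rangeRestrict
  have hg : Function.Surjective g := by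
    simpa [g] using (LinearMap.surjective_rangeRestrict _)
  have hg0 (m : M) : g m = 0 ↔ (m : R × N).1 = 0 := by
    simp [g, Subtype.ext_iff]
  let i : M.comap (LinearMap.inr R R N) →ₗ[R] M := (LinearMap.inr R R N).restrict fun _ h ↦ h
  have hi : Function.Injective i := fun v w h ↦ Subtype.ext (congrArg (fun m : M ↦ (m : R × N).2) h)
  have hexact : Function.Exact i g := by
    intro m
    rw [hg0]
    constructor
    · intro h
      exact ⟨⟨(m : R × N).2, by simp [← h]⟩, Subtype.ext (Prod.ext h.symm rfl)⟩
    · rintro ⟨v, rfl⟩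
      rfl
  obtain ⟨l, hl⟩ := Module.projective_lifting_property g LinearMap.id hg
  exact .of_equiv (hexact.splitSurjectiveEquiv hi ⟨l, hl⟩).1.symm

theorem Submodule.free_of_forall_smul_mem {x : R} (hx : x ≠ 0)
    (hprin : ∀ I : Ideal R, x ∈ I → I.IsPrincipal) {n : ℕ} (M : Submodule R (Fin n → R))
    (hM : ∀ v, x • v ∈ M) : Module.Free R M := by
  induction n with
  | zero => infer_instance
  | succ n ih =>
    let e := Fin.consLinearEquiv R fun _ : Fin (n + 1) ↦ R
    let M₀ := M.map (e.symm : (Fin (n + 1) → R) →ₗ[R] R × (Fin n → R))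
    have hM₀ (w : R × (Fin n → R)) : x • w ∈ M₀ := by
      simpa [M₀, Submodule.mem_map_equiv] using hM (e w)
    have hx₀ : x ∈ LinearMap.range (LinearMap.fst R R (Fin n → R) ∘ₗ M₀.subtype) :=
      ⟨⟨x • (1, 0), hM₀ _⟩, by simp⟩
    obtain ⟨a, ha⟩ := (hprin _ hx₀).principal
    have ha0 : a ≠ 0 := by
      rintro rfl
      simp [ha, hx] at hx₀
    have : Module.Free R (M₀.comap (LinearMap.inr R R (Fin n → R))) :=
      ih _ fun v ↦ by simpa using hM₀ (0, v)
    have : Module.Free R M₀ := M₀.free_of_free_comap_inr ha0 ha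
    exact .of_equiv (e.symm.submoduleMap M).symm

theorem Submodule.free_of_smul_le_of_le_range {x : R} (hx : x ≠ 0)
    (hprin : ∀ I : Ideal R, x ∈ I → I.IsPrincipal) {V : Type*} [AddCommGroup V] [Module R V]
    {n : ℕ} (ℓ : (Fin n → R) →ₗ[R] V) (hℓ : Function.Injective ℓ) (N : Submodule R V)
    (hN : N ≤ LinearMap.range ℓ) (hxN : ∀ v, x • ℓ v ∈ N) : Module.Free R N := by
  have : Module.Free R (N.comap ℓ) :=
    (N.comap ℓ).free_of_forall_smul_mem hx hprin fun v ↦ by simpa using hxN v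
  exact .of_equiv ((Submodule.equivMapOfInjective ℓ hℓ _).trans
    (LinearEquiv.ofEq _ _ (Submodule.map_comap_eq_of_le hN)))

open TensorProduct in
theorem Module.free_of_free_baseChange_localizationAway {x : R} (hx : x ≠ 0)
    (hprin : ∀ (n : ℕ) (I : Ideal R), x ^ n ∈ I → I.IsPrincipal)
    (S : Type*) [AddCommGroup S] [Module R S] [Module.Finite R S] [Module.Projective R S]
    [Module.Free (Localization.Away x) (Localization.Away x ⊗[R] S)] : Module.Free R S := by
  let Rx := Localization.Away x
  have hloc : Function.Injective (algebraMap R Rx) :=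
    IsLocalization.injective Rx (powers_le_nonZeroDivisors_of_noZeroDivisors hx)
  let j : S →ₗ[R] Rx ⊗[R] S := TensorProduct.mk R Rx S 1
  have hj : Function.Injective j := by
    have : j = (Algebra.linearMap R Rx).rTensor S ∘ₗ (TensorProduct.lid R S).symm := by
      ext; simp [j]
    rw [this]
    exact (Module.Flat.rTensor_preserves_injective_linearMap _ hloc).comp
      (TensorProduct.lid R S).symm.injective
  let b := (Module.Free.chooseBasis Rx (Rx ⊗[R] S)).reindex (Fintype.equivFin _)
  let ℓ : (Fin _ → R) →ₗ[R] Rx ⊗[R] S := Fintype.linearCombination R b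
  have hℓ : Function.Injective ℓ := linearIndependent_iff_injective_fintypeLinearCombination.mp
    (b.linearIndependent.restrict_scalars (by simpa [Algebra.smul_def] using hloc))
  have hj_span : Submodule.span Rx (LinearMap.range j : Set (Rx ⊗[R] S)) = ⊤ := by
    rw [LinearMap.range_eq_map, ← Submodule.baseChange_eq_span, Submodule.baseChange_top]
  have hℓ_span : Submodule.span Rx (LinearMap.range ℓ : Set (Rx ⊗[R] S)) = ⊤ := by
    refine eq_top_iff.mpr (b.span_eq.symm.trans_le (Submodule.span_mono ?_))
    rintro _ ⟨i, rfl⟩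
    exact ⟨Pi.single i 1, by simp [ℓ]⟩
  obtain ⟨d₁, hd₁⟩ := Submodule.exists_pow_smul_mem_of_le_span (x := x) (N₁ := LinearMap.range ℓ)
    (Submodule.fg_range j) (by rw [hℓ_span, Submodule.restrictScalars_top]; exact le_top)
  obtain ⟨d₂, hd₂⟩ := Submodule.exists_pow_smul_mem_of_le_span (x := x) (N₁ := LinearMap.range j)
    (Submodule.fg_range ℓ) (by rw [hj_span, Submodule.restrictScalars_top]; exact le_top)
  -- `x ^ d₁ • j` embeds `S` into `ℓ(Rⁿ)`, with image containing `x ^ (d₁ + d₂) • ℓ(Rⁿ)`.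
  let j' := x ^ d₁ • j
  have hj' : Function.Injective j' := fun s t h ↦ hj <|
    ((IsLocalization.Away.algebraMap_isUnit (S := Rx) x).pow d₁).smul_left_cancel.mp <| by
      simpa [j', ← map_pow, algebraMap_smul] using h
  have : Module.Free R (LinearMap.range j') := by
    refine Submodule.free_of_smul_le_of_le_range (pow_ne_zero (d₁ + d₂) hx) (hprin _) ℓ hℓ _ ?_ ?_
    · rintro _ ⟨s, rfl⟩
      exact hd₁ _ ⟨s, rfl⟩
    · intro v
      obtain ⟨s, hs⟩ := hd₂ _ ⟨v, rfl⟩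
      exact ⟨s, by simp [j', hs, pow_add, mul_smul]⟩
  exact .of_equiv (LinearEquiv.ofInjective j' hj').symm

end

theorem IsCyclotomicExtension.of_two_mul {n : ℕ} (hn : Odd n) (A B : Type*) [CommRing A]
    [CommRing B] [IsDomain B] [Algebra A B] [IsCyclotomicExtension {2 * n} A B] :
    IsCyclotomicExtension {n} A B := by
  have : NeZero n := ⟨hn.pos.ne'⟩
  obtain ⟨⟨ζ, hζ⟩, hgen⟩ := (iff_singleton (2 * n) A B).mp ‹_›
  refine (iff_singleton n A B).mpr ⟨⟨ζ ^ 2, hζ.pow (by simp [hn.pos]) rfl⟩, fun y ↦ ?_⟩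
  refine Algebra.adjoin_le (fun b (hb : b ^ (2 * n) = 1) ↦ ?_) (hgen y)
  rcases mul_self_eq_one_iff.mp (show b ^ n * b ^ n = 1 by rwa [← pow_add, ← two_mul]) with h | h
  · exact Algebra.subset_adjoin h
  · have : -b ∈ {b : B | b ^ n = 1} := by
      rw [Set.mem_ofPred_eq, hn.neg_pow, h, neg_neg]
    simpa using Subalgebra.neg_mem _ (Algebra.subset_adjoin (R := A) this)

theorem Ideal.isPrincipal_of_pow_mem {R : Type*} [CommRing R] [IsDedekindDomain R] {π : R}
    (hπ : Prime π) {I : Ideal R} {k : ℕ} (h : π ^ k ∈ I) : I.IsPrincipal := by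
  have hdvd : I ∣ Ideal.span {π} ^ k := by
    rwa [Ideal.dvd_iff_le, Ideal.span_singleton_pow, Ideal.span_singleton_le_iff_mem]
  obtain ⟨i, -, hi⟩ := (dvd_prime_pow (Ideal.prime_span_singleton_iff.mpr hπ) k).mp hdvd
  exact ⟨⟨π ^ i, by rw [associated_iff_eq.mp hi, Ideal.span_singleton_pow]⟩⟩

theorem IsCyclotomicExtension.Rat.isPrincipal_of_prime_pow_mem {p : ℕ} [Fact p.Prime]
    {K : Type*} [Field K] [NumberField K] [IsCyclotomicExtension {p} ℚ K] {s : ℕ}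
    {I : Ideal (𝓞 K)} (h : (p : 𝓞 K) ^ s ∈ I) : I.IsPrincipal := by
  have hζ := IsCyclotomicExtension.zeta_spec p ℚ K
  have hassoc := (associated_zeta_sub_one_pow_prime p hζ).pow_pow (n := s)
  refine Ideal.isPrincipal_of_pow_mem hζ.zeta_sub_one_prime' (k := (p - 1) * s) ?_
  rw [pow_mul]
  exact I.mem_of_dvd hassoc.symm.dvd h

theorem base_change_to_fourP_free_general
    (p : ℕ) (hp : p.Prime) (hodd : Odd p)
    (K L : Type*) [Field K] [Field L] [NumberField K]
    [Algebra ℚ K] [Algebra K L]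
    [IsCyclotomicExtension {((twoPPNat17 p hp : ℕ+) : ℕ)} ℚ K]
    (Splus : Type*) [AddCommGroup Splus] [Module (𝓞 K) Splus]
    [Module.Finite (𝓞 K) Splus] [Module.Projective (𝓞 K) Splus]
    (hfree : Module.Free (Localization.Away ((p : 𝓞 K)))
      (TensorProduct (𝓞 K) (Localization.Away ((p : 𝓞 K))) Splus)) :
    Module.Free (𝓞 L) (TensorProduct (𝓞 K) (𝓞 L) Splus) := by
  -- The cyclotomic API is stated for the canonical `ℚ`-algebra structure of `K`.
  obtain rfl : ‹Algebra ℚ K› = DivisionRing.toRatAlgebra := Subsingleton.elim _ _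
  have : Fact p.Prime := ⟨hp⟩
  have : IsCyclotomicExtension {2 * p} ℚ K := ‹_›
  have : IsCyclotomicExtension {p} ℚ K := .of_two_mul hodd ℚ K
  have : Module.Free (𝓞 K) Splus :=
    Module.free_of_free_baseChange_localizationAway (NeZero.natCast_ne p (𝓞 K))
      (fun _ _ ↦ IsCyclotomicExtension.Rat.isPrincipal_of_prime_pow_mem) Splus
  infer_instance

/-- Let `p ≡ 1 mod 4` be an odd prime, `K = ℚ(ζ_{2p})` and `L = ℚ(ζ_{4p})` with
`K ⊆ L` (so `ℤ[A] = 𝓞 K` and `ℤ[α] = 𝓞 L`, `α² = A`).  If `S⁺` is a finitely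
generated projective `ℤ[A]`-module which becomes free over the localization
`ℤ[A, 1/p]`, then `S⁺ ⊗_{ℤ[A]} ℤ[α]` is a free `ℤ[α]`-module. -/
theorem base_change_to_fourP_free
    (p : ℕ) (hp : p.Prime) (hodd : Odd p) (hmod : p % 4 = 1)
    (K L : Type*) [Field K] [Field L] [NumberField K] [NumberField L]
    [Algebra ℚ K] [Algebra ℚ L] [Algebra K L] [IsScalarTower ℚ K L]
    [IsCyclotomicExtension {((twoPPNat17 p hp : ℕ+) : ℕ)} ℚ K]
    [IsCyclotomicExtension {((fourPPNat17 p hp : ℕ+) : ℕ)} ℚ L]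
    (Splus : Type*) [AddCommGroup Splus] [Module (𝓞 K) Splus]
    [Module.Finite (𝓞 K) Splus] [Module.Projective (𝓞 K) Splus]
    (hfree : Module.Free (Localization.Away ((p : 𝓞 K)))
      (TensorProduct (𝓞 K) (Localization.Away ((p : 𝓞 K))) Splus)) :
    Module.Free (𝓞 L) (TensorProduct (𝓞 K) (𝓞 L) Splus) :=
  base_change_to_fourP_free_general p hp hodd K L Splus hfree
end
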